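/- arXiv:0902.4700 — 2 statements merged into one kernel-verified Lean document; each statement's English description precedes it below -/
import Mathlib

section
/- The polynomial ring R = k[x_1,…,x_{n+1}] is a free module of rank 2 over the invariant subring R^i = R^{s_i}, with basis {1, x_i}: every f ∈ R can be written uniquely as f = g + h·x_i with g, h ∈ R^i (namely g = P_i(f) and h = ∂_i(f)). -/
/-!
Write `s` for the swap of `X a` and `X b`. Since `X a - X b` divides `X j - s (X j)` for every
variable, it divides `f - s f`; the quotient `h` is the divided difference, it is `s`-invariant,
and so is `g = f - h * X a`. For uniqueness, applying `s` to `g + h * X a = 0` gives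
`g + h * X b = 0`, so `h * (X a - X b) = 0`; and `X a - X b` is a non-zero-divisor, as it becomes
the monic `X - C (X b)` once `MvPolynomial σ R` is viewed as a polynomial ring in `X a`.
-/

open MvPolynomial

open scoped nonZeroDivisors

namespace MvPolynomial

variable {σ R : Type*} [CommRing R] [DecidableEq σ] {a b : σ}

theorem X_sub_X_mem_nonZeroDivisors (hab : a ≠ b) :
    (X a - X b : MvPolynomial σ R) ∈ (MvPolynomial σ R)⁰ := by
  let e := (renameEquiv R (Equiv.optionSubtypeNe a).symm).trans (optionEquivLeft R _)
  have he : e (X a - X b) = Polynomial.X - Polynomial.C (X ⟨b, hab.symm⟩) := by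
    simp [e, Equiv.optionSubtypeNe_symm_of_ne hab.symm, optionEquivLeft_X_none,
      optionEquivLeft_X_some]
  exact mem_nonZeroDivisors_of_injective e.injective
    (he ▸ (Polynomial.monic_X_sub_C _).mem_nonZeroDivisors)

theorem rename_swap_rename_swap (f : MvPolynomial σ R) :
    rename (Equiv.swap a b) (rename (Equiv.swap a b) f) = f := by
  rw [rename_rename, Function.Involutive.comp_self (Equiv.swap_apply_self a b), rename_id_apply]

theorem X_sub_X_dvd_X_sub_X_swap (a b j : σ) :
    (X a - X b : MvPolynomial σ R) ∣ X j - X (Equiv.swap a b j) := by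
  rcases eq_or_ne j a with rfl | hja
  · simp
  rcases eq_or_ne j b with rfl | hjb
  · exact ⟨-1, by simp⟩
  · simp [Equiv.swap_apply_of_ne_of_ne hja hjb]

theorem X_sub_X_dvd_sub_rename_swap (f : MvPolynomial σ R) :
    X a - X b ∣ f - rename (Equiv.swap a b) f := by
  induction f using MvPolynomial.induction_on with
  | C r => simp
  | add p q hp hq =>
    rw [map_add, add_sub_add_comm]
    exact dvd_add hp hq
  | mul_X p j hp =>
    have hsplit : p * X j - rename (Equiv.swap a b) (p * X j) =
        (p - rename (Equiv.swap a b) p) * X j +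
          rename (Equiv.swap a b) p * (X j - X (Equiv.swap a b j)) := by
      rw [map_mul, rename_X]
      ring
    rw [hsplit]
    exact dvd_add (dvd_mul_of_dvd_left hp _)
      (dvd_mul_of_dvd_right (X_sub_X_dvd_X_sub_X_swap a b j) _)

theorem rename_swap_eq_of_sub_rename_swap_eq_mul (hab : a ≠ b) {f h : MvPolynomial σ R}
    (hfh : f - rename (Equiv.swap a b) f = (X a - X b) * h) :
    rename (Equiv.swap a b) h = h := by
  have hswapped := congrArg (rename (Equiv.swap a b)) hfh
  simp only [map_sub, map_mul, rename_X, Equiv.swap_apply_left, Equiv.swap_apply_right,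
    rename_swap_rename_swap] at hswapped
  rw [← mul_cancel_right_mem_nonZeroDivisors (X_sub_X_mem_nonZeroDivisors hab)]
  linear_combination hswapped + hfh

theorem exists_rename_swap_invariant_add_mul_X (hab : a ≠ b) (f : MvPolynomial σ R) :
    ∃ g h : MvPolynomial σ R, rename (Equiv.swap a b) g = g ∧
      rename (Equiv.swap a b) h = h ∧ f = g + h * X a := by
  obtain ⟨h, hfh⟩ := X_sub_X_dvd_sub_rename_swap (a := a) (b := b) f
  have hh := rename_swap_eq_of_sub_rename_swap_eq_mul hab hfh
  refine ⟨f - h * X a, h, ?_, hh, by ring⟩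
  rw [map_sub, map_mul, hh, rename_X, Equiv.swap_apply_left]
  linear_combination -hfh

theorem eq_of_rename_swap_invariant_add_mul_X_eq (hab : a ≠ b) {g h g' h' : MvPolynomial σ R}
    (hg : rename (Equiv.swap a b) g = g) (hh : rename (Equiv.swap a b) h = h)
    (hg' : rename (Equiv.swap a b) g' = g') (hh' : rename (Equiv.swap a b) h' = h')
    (heq : g + h * X a = g' + h' * X a) : g = g' ∧ h = h' := by
  have hswapped := congrArg (rename (Equiv.swap a b)) heq
  simp only [map_add, map_mul, hg, hh, hg', hh', rename_X, Equiv.swap_apply_left] at hswapped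
  have hdiff : (h - h') * (X a - X b) = 0 := by linear_combination heq - hswapped
  have hh_eq : h = h' := sub_eq_zero.mp <|
    (mul_right_mem_nonZeroDivisors_eq_zero_iff (X_sub_X_mem_nonZeroDivisors hab)).mp hdiff
  exact ⟨by linear_combination heq - hh_eq * X a, hh_eq⟩

theorem existsUnique_rename_swap_invariant_add_mul_X (hab : a ≠ b) (f : MvPolynomial σ R) :
    ∃! p : MvPolynomial σ R × MvPolynomial σ R, rename (Equiv.swap a b) p.1 = p.1 ∧
      rename (Equiv.swap a b) p.2 = p.2 ∧ f = p.1 + p.2 * X a := by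
  obtain ⟨g, h, hg, hh, hf⟩ := exists_rename_swap_invariant_add_mul_X hab f
  refine ⟨(g, h), ⟨hg, hh, hf⟩, fun ⟨g', h'⟩ ⟨hg', hh', hf'⟩ => ?_⟩
  obtain ⟨rfl, rfl⟩ :=
    eq_of_rename_swap_invariant_add_mul_X_eq hab hg' hh' hg hh (hf'.symm.trans hf)
  rfl

end MvPolynomial

/-- `R = k[x_1,…,x_{n+1}]` is free of rank 2 over the subring of `s_i`-invariants, with
basis `{1, x_i}`: every `f` is uniquely `f = g + h·x_i` with `g, h` invariant under
`s_i = (i, i+1)`. -/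
theorem poly_free_rank_two_over_invariants (n : ℕ) (k : Type*) [CommRing k] (i : Fin n)
    (f : MvPolynomial (Fin (n + 1)) k) :
    ∃! p : MvPolynomial (Fin (n + 1)) k × MvPolynomial (Fin (n + 1)) k,
      rename (Equiv.swap i.castSucc i.succ) p.1 = p.1 ∧
      rename (Equiv.swap i.castSucc i.succ) p.2 = p.2 ∧
      f = p.1 + p.2 * X i.castSucc :=
  existsUnique_rename_swap_invariant_add_mul_X Fin.castSucc_lt_succ.ne f
end

section
/- There is an isomorphism of R-bimodules B_i ⊗_R B_i ≅ B_i ⊕ B_i. -/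
set_option synthInstance.maxHeartbeats 1000000
set_option maxHeartbeats 1000000


open MvPolynomial TensorProduct

/-- The subalgebra `R^i` of polynomials invariant under the transposition `s_i = (i,i+1)`. -/
noncomputable def Rinv (n : ℕ) (k : Type*) [CommRing k] (i : Fin n) :
    Subalgebra k (MvPolynomial (Fin (n + 1)) k) :=
  AlgHom.equalizer (rename (Equiv.swap i.castSucc i.succ))
    (AlgHom.id k (MvPolynomial (Fin (n + 1)) k))

/-- The Soergel bimodule `B_i = R ⊗_{R^i} R` (ungraded). -/
abbrev SoergelB (n : ℕ) (k : Type*) [CommRing k] (i : Fin n) :=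
  TensorProduct (Rinv n k i) (MvPolynomial (Fin (n + 1)) k) (MvPolynomial (Fin (n + 1)) k)

/-- The element `v₀ = 1 ⊗ x_i − x_{i+1} ⊗ 1` of `B_i`. -/
noncomputable def v0 (n : ℕ) (k : Type*) [CommRing k] (i : Fin n) : SoergelB n k i :=
  (1 : MvPolynomial (Fin (n + 1)) k) ⊗ₜ[Rinv n k i] (X i.castSucc) -
    (X i.succ) ⊗ₜ[Rinv n k i] (1 : MvPolynomial (Fin (n + 1)) k)

/-- `B_i ⊗_R B_i ≅ R ⊗_{R^i} R ⊗_{R^i} R`, as a left `R`-module. -/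
abbrev SoergelBB (n : ℕ) (k : Type*) [CommRing k] (i : Fin n) :=
  TensorProduct (MvPolynomial (Fin (n + 1)) k) (SoergelB n k i) (SoergelB n k i)

section Dem
variable {n : ℕ} {k : Type*} [CommRing k]

/-- The swap algebra endomorphism. -/
noncomputable def sw (i : Fin n) :
    MvPolynomial (Fin (n + 1)) k →ₐ[k] MvPolynomial (Fin (n + 1)) k :=
  rename (Equiv.swap i.castSucc i.succ)

lemma sw_X_castSucc (i : Fin n) :
    sw i (X i.castSucc : MvPolynomial (Fin (n + 1)) k) = X i.succ := by
  simp [sw]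

lemma sw_X_succ (i : Fin n) :
    sw i (X i.succ : MvPolynomial (Fin (n + 1)) k) = X i.castSucc := by
  simp [sw]

lemma sw_sw (i : Fin n) (f : MvPolynomial (Fin (n + 1)) k) : sw i (sw i f) = f := by
  simp only [sw, rename_rename]
  have : (Equiv.swap i.castSucc i.succ) ∘ (Equiv.swap i.castSucc i.succ) = id := by
    funext l; simp [Equiv.swap_apply_self]
  rw [this, rename_id, AlgHom.id_apply]

lemma exists_dem (i : Fin n) (f : MvPolynomial (Fin (n + 1)) k) :
    ∃ g, f - sw i f = (X i.castSucc - X i.succ) * g := by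
  induction f using MvPolynomial.induction_on with
  | C r => exact ⟨0, by simp [sw]⟩
  | add p q hp hq =>
    obtain ⟨g, hg⟩ := hp; obtain ⟨g', hg'⟩ := hq
    exact ⟨g + g', by rw [map_add]; linear_combination hg + hg'⟩
  | mul_X p l hp =>
    obtain ⟨g, hg⟩ := hp
    by_cases hla : l = i.castSucc
    · subst hla
      exact ⟨g * X i.castSucc + sw i p, by
        rw [map_mul, sw_X_castSucc]
        linear_combination (X i.castSucc : MvPolynomial (Fin (n+1)) k) * hg⟩
    · by_cases hlb : l = i.succ
      · subst hlb
        exact ⟨g * X i.succ - sw i p, by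
          rw [map_mul, sw_X_succ]
          linear_combination (X i.succ : MvPolynomial (Fin (n+1)) k) * hg⟩
      · refine ⟨g * X l, ?_⟩
        have : sw i (X l : MvPolynomial (Fin (n+1)) k) = X l := by
          simp [sw, Equiv.swap_apply_of_ne_of_ne hla hlb]
        rw [map_mul, this]; linear_combination (X l : MvPolynomial (Fin (n+1)) k) * hg

lemma d_cancel (i : Fin n) {u v : MvPolynomial (Fin (n + 1)) k}
    (h : (X i.castSucc - X i.succ) * u = (X i.castSucc - X i.succ) * v) : u = v := by
  have hba : i.succ ≠ i.castSucc := (Fin.castSucc_lt_succ (i := i)).ne'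
  set a := i.castSucc; set b := i.succ
  let ψ : MvPolynomial (Fin (n + 1)) k →ₐ[k] MvPolynomial (Fin (n + 1)) k :=
    aeval (fun l => if l = a then X a + X b else X l)
  let ψ' : MvPolynomial (Fin (n + 1)) k →ₐ[k] MvPolynomial (Fin (n + 1)) k :=
    aeval (fun l => if l = a then X a - X b else X l)
  have hcomp : ψ'.comp ψ = AlgHom.id k _ := by
    apply MvPolynomial.algHom_ext; intro l
    by_cases hl : l = a <;> simp [ψ, ψ', hl, hba]
  have hinj : Function.Injective ψ := by
    intro x y hxy
    have := congrArg ψ' hxy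
    simpa [← AlgHom.comp_apply, hcomp] using this
  have hX : ψ (X a - X b) = X a := by
    simp [ψ, hba]
  have h2 : (X a : MvPolynomial (Fin (n+1)) k) * ψ u = X a * ψ v := by
    have := congrArg ψ h
    rw [map_mul, map_mul, hX] at this
    exact this
  exact hinj (isRegular_X.left h2)

/-- Demazure operator. -/
noncomputable def dem (i : Fin n) (f : MvPolynomial (Fin (n + 1)) k) :
    MvPolynomial (Fin (n + 1)) k := (exists_dem i f).choose

lemma dem_spec (i : Fin n) (f : MvPolynomial (Fin (n + 1)) k) :
    f - sw i f = (X i.castSucc - X i.succ) * dem i f := (exists_dem i f).choose_spec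

lemma dem_eq {i : Fin n} {f g : MvPolynomial (Fin (n + 1)) k}
    (h : f - sw i f = (X i.castSucc - X i.succ) * g) : dem i f = g :=
  d_cancel i ((dem_spec i f).symm.trans h)

lemma dem_add (i : Fin n) (f g : MvPolynomial (Fin (n + 1)) k) :
    dem i (f + g) = dem i f + dem i g :=
  dem_eq (by rw [map_add]; linear_combination dem_spec i f + dem_spec i g)

lemma dem_inv_mul (i : Fin n) (c f : MvPolynomial (Fin (n + 1)) k) (hc : sw i c = c) :
    dem i (c * f) = c * dem i f :=
  dem_eq (by rw [map_mul, hc]; linear_combination c * dem_spec i f)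

lemma dem_of_inv (i : Fin n) (f : MvPolynomial (Fin (n + 1)) k) (hf : sw i f = f) :
    dem i f = 0 := dem_eq (by rw [hf]; ring)

lemma dem_X (i : Fin n) : dem i (X i.castSucc : MvPolynomial (Fin (n + 1)) k) = 1 :=
  dem_eq (by rw [sw_X_castSucc]; ring)

lemma sw_dem (i : Fin n) (f : MvPolynomial (Fin (n + 1)) k) :
    sw i (dem i f) = dem i f := by
  apply d_cancel i
  have h1 := congrArg (sw i) (dem_spec i f)
  rw [map_sub, map_mul, map_sub, sw_X_castSucc, sw_X_succ, sw_sw] at h1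
  linear_combination h1 + dem_spec i f

lemma sw_pi (i : Fin n) (f : MvPolynomial (Fin (n + 1)) k) :
    sw i (f - dem i f * X i.castSucc) = f - dem i f * X i.castSucc := by
  rw [map_sub, map_mul, sw_dem, sw_X_castSucc]
  linear_combination - dem_spec i f

end Dem

section Maps
variable {n : ℕ} {k : Type*} [CommRing k] (i : Fin n)

lemma mem_Rinv (f : MvPolynomial (Fin (n + 1)) k) :
    f ∈ Rinv n k i ↔ sw i f = f := by
  rw [Rinv, AlgHom.mem_equalizer]
  exact Iff.rfl

lemma Rinv_smul_def (c : Rinv n k i) (f : MvPolynomial (Fin (n + 1)) k) :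
    c • f = (c : MvPolynomial (Fin (n + 1)) k) * f := rfl

lemma Rinv_inv (c : Rinv n k i) : sw i (c : MvPolynomial (Fin (n + 1)) k) = c :=
  (mem_Rinv i _).1 c.2

/-- `g ↦ g - ∂g·x_i` as an `Rinv`-linear map. -/
noncomputable def piLin : MvPolynomial (Fin (n + 1)) k →ₗ[Rinv n k i] MvPolynomial (Fin (n + 1)) k where
  toFun g := g - dem i g * X i.castSucc
  map_add' f g := by show (f + g) - dem i (f + g) * _ = _; rw [dem_add]; ring
  map_smul' c f := by
    show (c • f) - dem i (c • f) * _ = _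
    simp only [Rinv_smul_def, RingHom.id_apply]
    rw [dem_inv_mul i _ _ (Rinv_inv i c)]; ring

/-- `g ↦ ∂g` as an `Rinv`-linear map. -/
noncomputable def demLin : MvPolynomial (Fin (n + 1)) k →ₗ[Rinv n k i] MvPolynomial (Fin (n + 1)) k where
  toFun g := dem i g
  map_add' f g := dem_add i f g
  map_smul' c f := by
    simp only [Rinv_smul_def, RingHom.id_apply]
    exact dem_inv_mul i _ _ (Rinv_inv i c)

lemma piLin_apply (g : MvPolynomial (Fin (n + 1)) k) :
    piLin i g = g - dem i g * X i.castSucc := rfl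

lemma demLin_apply (g : MvPolynomial (Fin (n + 1)) k) :
    demLin i g = dem i g := rfl

lemma piLin_mem (g : MvPolynomial (Fin (n + 1)) k) : piLin i g ∈ Rinv n k i :=
  (mem_Rinv i _).2 (sw_pi i g)

lemma demLin_mem (g : MvPolynomial (Fin (n + 1)) k) : demLin i g ∈ Rinv n k i :=
  (mem_Rinv i _).2 (sw_dem i g)

/-- Lift an `Rinv`-linear map on the second factor to a `T`-linear map on `B`. -/
noncomputable def phiAux
    (D : MvPolynomial (Fin (n + 1)) k →ₗ[Rinv n k i] MvPolynomial (Fin (n + 1)) k) :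
    SoergelB n k i →ₗ[MvPolynomial (Fin (n + 1)) k] MvPolynomial (Fin (n + 1)) k where
  toFun := TensorProduct.lift
    { toFun := fun f => f • D
      map_add' := fun f g => add_smul f g D
      map_smul' := fun c f => smul_assoc c f D }
  map_add' x y := map_add _ x y
  map_smul' r x := by
    simp only [RingHom.id_apply]
    induction x using TensorProduct.induction_on with
    | zero => simp
    | tmul f g =>
      rw [TensorProduct.smul_tmul']
      simp only [lift.tmul, LinearMap.coe_mk, AddHom.coe_mk, LinearMap.smul_apply,
        smul_eq_mul, mul_assoc]
    | add x y hx hy => rw [smul_add, map_add, map_add, hx, hy, smul_add]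

lemma phiAux_tmul (D) (f g : MvPolynomial (Fin (n + 1)) k) :
    phiAux i D (f ⊗ₜ[Rinv n k i] g) = f * D g := by
  simp only [phiAux, LinearMap.coe_mk, AddHom.coe_mk, lift.tmul, LinearMap.smul_apply,
    smul_eq_mul]

noncomputable def eFwd :
    SoergelBB n k i →ₗ[MvPolynomial (Fin (n + 1)) k]
      SoergelB n k i × SoergelB n k i :=
  (TensorProduct.lift ((LinearMap.lsmul (MvPolynomial (Fin (n + 1)) k)
      (SoergelB n k i)).comp (phiAux i (piLin i)))).prod
    (TensorProduct.lift ((LinearMap.lsmul (MvPolynomial (Fin (n + 1)) k)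
      (SoergelB n k i)).comp (phiAux i (demLin i))))

lemma eFwd_tmul (m b : SoergelB n k i) :
    eFwd (k := k) i (m ⊗ₜ[MvPolynomial (Fin (n + 1)) k] b) =
      (phiAux i (piLin i) m • b, phiAux i (demLin i) m • b) := rfl

noncomputable def eBwd :
    SoergelB n k i × SoergelB n k i →ₗ[MvPolynomial (Fin (n + 1)) k] SoergelBB n k i :=
  LinearMap.coprod
    (TensorProduct.mk _ _ _ ((1 : MvPolynomial (Fin (n + 1)) k) ⊗ₜ[Rinv n k i] 1))
    (TensorProduct.mk _ _ _ ((1 : MvPolynomial (Fin (n + 1)) k) ⊗ₜ[Rinv n k i] X i.castSucc))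

lemma fwd_bwd : (eFwd (k := k) i).comp (eBwd (k := k) i) = LinearMap.id := by
  apply LinearMap.ext
  rintro ⟨u, v⟩
  have h1 : dem i (1 : MvPolynomial (Fin (n + 1)) k) = 0 := dem_of_inv i 1 (map_one _)
  have h2 := dem_X (k := k) i
  simp only [LinearMap.comp_apply, eBwd, LinearMap.coprod_apply, TensorProduct.mk_apply,
    map_add, eFwd_tmul, phiAux_tmul, LinearMap.id_apply]
  simp only [piLin_apply, demLin_apply, h1, h2, Prod.mk_add_mk]
  simp [Prod.ext_iff]

lemma key_decomp (m : SoergelB n k i) :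
    (phiAux i (piLin i) m) • (((1 : MvPolynomial (Fin (n + 1)) k) ⊗ₜ[Rinv n k i] 1) : SoergelB n k i)
      + (phiAux i (demLin i) m) • ((1 : MvPolynomial (Fin (n + 1)) k) ⊗ₜ[Rinv n k i] X i.castSucc)
      = m := by
  induction m using TensorProduct.induction_on with
  | zero => simp
  | add x y hx hy =>
    rw [map_add, map_add, add_smul, add_smul, add_add_add_comm, hx, hy]
  | tmul f g =>
    rw [phiAux_tmul, phiAux_tmul, TensorProduct.smul_tmul', TensorProduct.smul_tmul']
    simp only [smul_eq_mul, mul_one]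
    have e1 : (f * (piLin i g)) ⊗ₜ[Rinv n k i] (1 : MvPolynomial (Fin (n + 1)) k)
        = f ⊗ₜ[Rinv n k i] (piLin i g * 1) := by
      rw [mul_comm f (piLin i g),
        ← Rinv_smul_def i ⟨piLin i g, piLin_mem i g⟩ f, TensorProduct.smul_tmul,
        Rinv_smul_def]
    have e2 : (f * (demLin i g)) ⊗ₜ[Rinv n k i] (X i.castSucc : MvPolynomial (Fin (n + 1)) k)
        = f ⊗ₜ[Rinv n k i] (demLin i g * X i.castSucc) := by
      rw [mul_comm f (demLin i g),
        ← Rinv_smul_def i ⟨demLin i g, demLin_mem i g⟩ f, TensorProduct.smul_tmul,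
        Rinv_smul_def]
    rw [e1, e2, ← TensorProduct.tmul_add]
    congr 1
    rw [piLin_apply, demLin_apply]; ring

lemma bwd_fwd : (eBwd (k := k) i).comp (eFwd (k := k) i) = LinearMap.id := by
  apply TensorProduct.ext'
  intro m b
  simp only [LinearMap.comp_apply, eFwd_tmul, LinearMap.id_apply, eBwd,
    LinearMap.coprod_apply, TensorProduct.mk_apply]
  rw [← TensorProduct.smul_tmul, ← TensorProduct.smul_tmul, ← TensorProduct.add_tmul,
    key_decomp]

end Maps

/-- There is an isomorphism of `R`-bimodules `B_i ⊗_R B_i ≅ B_i ⊕ B_i`: a left `R`-linear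
equivalence which also commutes with the right `R`-action. -/
theorem soergel_BB_decomposition (n : ℕ) (k : Type*) [CommRing k] (i : Fin n) :
    ∃ e : SoergelBB n k i ≃ₗ[MvPolynomial (Fin (n + 1)) k]
        (SoergelB n k i × SoergelB n k i),
      ∀ (ξ : MvPolynomial (Fin (n + 1)) k) (v : SoergelBB n k i),
        e (v * ((1 : SoergelB n k i) ⊗ₜ[MvPolynomial (Fin (n + 1)) k]
            ((1 : MvPolynomial (Fin (n + 1)) k) ⊗ₜ[Rinv n k i] ξ))) =
          ((e v).1 * ((1 : MvPolynomial (Fin (n + 1)) k) ⊗ₜ[Rinv n k i] ξ),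
           (e v).2 * ((1 : MvPolynomial (Fin (n + 1)) k) ⊗ₜ[Rinv n k i] ξ)) := by
  refine ⟨LinearEquiv.ofLinear (eFwd (k := k) i) (eBwd (k := k) i) (fwd_bwd i) (bwd_fwd i),
    ?_⟩
  intro ξ v
  induction v using TensorProduct.induction_on with
  | zero => rw [show (0 : SoergelBB n k i) * _ = 0 from LinearMap.map_zero₂ _ _]; simp [Prod.ext_iff]
  | add x y hx hy =>
    rw [show (x + y) * _ = x * _ + y * _ from LinearMap.map_add₂ _ _ _ _, map_add, hx, hy, map_add]
    simp [Prod.ext_iff, add_mul]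
  | tmul m b =>
    rw [Algebra.TensorProduct.tmul_mul_tmul, mul_one, LinearEquiv.ofLinear_apply,
      LinearEquiv.ofLinear_apply, eFwd_tmul, eFwd_tmul]
    simp only [smul_mul_assoc]
end
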